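/- arXiv:2502.01970 — 3 statements merged into one kernel-verified Lean document; each statement's English description precedes it below -/
import Mathlib

section
/- The number of classical parking functions of length n, i.e. sequences (a_1,...,a_n) of positive integers whose increasing rearrangement (b_1,...,b_n) satisfies b_i ≤ i for all i, equals (n+1)^(n-1). -/
/-
Pollak's circular argument. Read a function `a : Fin n → ZMod (n + 1)` as the parking preference
`j ↦ (a j).val + 1`. Adding a constant to `a` is a free action of `ZMod (n + 1)`, and each orbit
contains exactly one parking function: with `x d = #a⁻¹{d} - 1`, which sums to `-1` around the
cycle, `c + a` is parking iff every proper prefix sum of `x` read cyclically from `-c` is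
nonnegative, and by the cycle lemma exactly one starting point has this property. Hence the
parking functions number `(n + 1) ^ n / (n + 1)`.
-/

open Finset Function

/-- A classical parking function of length `n`: a sequence of positive integers whose
increasing rearrangement `(b_1, …, b_n)` satisfies `b_i ≤ i`; equivalently, for each `i`,
at least `i + 1` of the values are `≤ i + 1` (with `i` ranging over `Fin n`). -/
def IsParkingFunction (n : ℕ) (f : Fin n → ℕ+) : Prop :=
  ∀ i : Fin n, (i : ℕ) + 1 ≤ (Finset.univ.filter fun j => (f j : ℕ) ≤ (i : ℕ) + 1).card

theorem Nat.card_subtype_comp_eq_of_injective {ι α β : Type*} {g : α → β} (hg : Injective g)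
    (P : (ι → β) → Prop) (hP : ∀ f, P f → ∀ i, f i ∈ Set.range g) :
    Nat.card {a : ι → α // P (g ∘ a)} = Nat.card {f // P f} := by
  refine Nat.card_eq_of_bijective (fun a => ⟨g ∘ a.1, a.2⟩) ⟨fun a a' h => ?_, ?_⟩
  · exact Subtype.ext (hg.comp_left (congrArg Subtype.val h))
  · rintro ⟨f, hf⟩
    choose a ha using hP f hf
    have hfa : g ∘ a = f := funext ha
    exact ⟨⟨a, hfa ▸ hf⟩, Subtype.ext hfa⟩

theorem AddAction.card_subtype_mul_card_eq_of_existsUnique {G X : Type*} [AddGroup G]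
    [AddAction G X] (P : X → Prop) (h : ∀ x : X, ∃! g : G, P (g +ᵥ x)) :
    Nat.card {x // P x} * Nat.card G = Nat.card X := by
  rw [← Nat.card_prod]
  refine Nat.card_eq_of_bijective (fun p => p.2 +ᵥ p.1.1) ⟨?_, fun x => ?_⟩
  · rintro ⟨⟨x, hx⟩, g⟩ ⟨⟨x', hx'⟩, g'⟩ (hxx' : g +ᵥ x = g' +ᵥ x')
    have hx'x : (-g' + g) +ᵥ x = x' := by rw [add_vadd, hxx', neg_vadd_vadd]
    have hg : -g' + g = 0 := (h x).unique (hx'x ▸ hx') (by rwa [zero_vadd])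
    obtain rfl : g = g' := (neg_add_eq_zero.mp hg).symm
    obtain rfl : x = x' := by simpa using hx'x
    rfl
  · obtain ⟨g, hg, -⟩ := h x
    exact ⟨(⟨g +ᵥ x, hg⟩, -g), neg_vadd_vadd g x⟩

def IsCycleStart (W : ℕ → ℤ) (N b : ℕ) : Prop :=
  ∀ k, 0 < k → k < N → W b ≤ W (b + k)

section CycleLemma

variable {W : ℕ → ℤ} {N : ℕ}

theorem exists_isCycleStart (hN : 0 < N) (hW : ∀ u, W (u + N) = W u - 1) :
    ∃ b < N, IsCycleStart W N b := by
  classical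
  have hmin : ∃ b, b < N ∧ ∀ u < N, W b ≤ W u := by
    obtain ⟨b, hb, hmin⟩ := exists_min_image (range N) W ⟨0, mem_range.2 hN⟩
    exact ⟨b, mem_range.1 hb, fun u hu => hmin u (mem_range.2 hu)⟩
  obtain ⟨hbN, hb⟩ := Nat.find_spec hmin
  -- `W` is strictly larger before the first minimiser on `[0, N)`, so the values one period
  -- later, which are lower by one, are still no smaller than the minimum.
  have hfirst : ∀ w < Nat.find hmin, W (Nat.find hmin) < W w := fun w hw => by
    have hw' := Nat.find_min hmin hw
    push Not at hw'
    obtain ⟨u, hu, hlt⟩ := hw' (hw.trans hbN)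
    exact (hb u hu).trans_lt hlt
  refine ⟨Nat.find hmin, hbN, fun k _ hk => ?_⟩
  rcases lt_or_ge (Nat.find hmin + k) N with h | h
  · exact hb _ h
  · have hlt := hfirst (Nat.find hmin + k - N) (by omega)
    have hwrap := hW (Nat.find hmin + k - N)
    rw [Nat.sub_add_cancel h] at hwrap
    omega

theorem IsCycleStart.eq (hW : ∀ u, W (u + N) = W u - 1) {b₁ b₂ : ℕ} (hb₁ : b₁ < N)
    (hb₂ : b₂ < N) (h₁ : IsCycleStart W N b₁) (h₂ : IsCycleStart W N b₂) :
    b₁ = b₂ := by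
  -- Two starts reach each other within a period, but going once around lowers `W` by one.
  have key : ∀ {b b'}, b < b' → b' < N →
      IsCycleStart W N b → IsCycleStart W N b' → False := by
    intro b b' hlt hb' h h'
    have hle := h (b' - b) (by omega) (by omega)
    have hle' := h' (b + N - b') (by omega) (by omega)
    rw [Nat.add_sub_cancel' hlt.le] at hle
    rw [Nat.add_sub_cancel' (by omega), hW] at hle'
    omega
  rcases lt_trichotomy b₁ b₂ with h | h | h
  · exact (key h hb₂ h₁ h₂).elim
  · exact h
  · exact (key h hb₁ h₂ h₁).elim

end CycleLemma

namespace ZMod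

variable {N : ℕ} [NeZero N]

theorem sum_range_natCast_add {M : Type*} [AddCommMonoid M] (f : ZMod N → M) (c : ZMod N) :
    ∑ i ∈ range N, f (c + i) = ∑ d, f d := calc
  ∑ i ∈ range N, f (c + i) = ∑ d, f (c + d) :=
    sum_nbij' Nat.cast val (fun _ _ => mem_univ _) (fun d _ => mem_range.2 d.val_lt)
      (fun _ hi => val_natCast_of_lt (mem_range.1 hi)) (fun d _ => natCast_zmod_val d)
      (fun _ _ => rfl)
  _ = ∑ d, f d := Equiv.sum_comp (Equiv.addLeft c) f

theorem existsUnique_forall_sum_range_nonneg (x : ZMod N → ℤ) (hx : ∑ d, x d = -1) :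
    ∃! c : ZMod N, ∀ k, 0 < k → k < N → 0 ≤ ∑ i ∈ range k, x (c + i) := by
  set W : ℕ → ℤ := fun u => ∑ i ∈ range u, x i
  have hW : ∀ u, W (u + N) = W u - 1 := fun u => by
    simp only [W, sum_range_add, Nat.cast_add, sum_range_natCast_add (x ·), hx, sub_eq_add_neg]
  have hshift : ∀ (c : ZMod N) k, ∑ i ∈ range k, x (c + i) = W (c.val + k) - W c.val :=
    fun c k => by simp [W, sum_range_add]
  have hiff : ∀ c : ZMod N, (∀ k, 0 < k → k < N → 0 ≤ ∑ i ∈ range k, x (c + i)) ↔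
      IsCycleStart W N c.val := by
    simp [IsCycleStart, hshift]
  obtain ⟨b, hbN, hb⟩ := exists_isCycleStart (NeZero.pos N) hW
  refine ⟨b, (hiff _).2 (by rwa [val_natCast_of_lt hbN]), fun c hc => ?_⟩
  rw [← IsCycleStart.eq hW c.val_lt hbN ((hiff c).1 hc) hb, natCast_zmod_val]

theorem val_eq_iff_eq_natCast {a : ZMod N} {v : ℕ} (hv : v < N) : a.val = v ↔ a = v := by
  constructor
  · rintro rfl
    exact (natCast_zmod_val a).symm
  · rintro rfl
    exact val_natCast_of_lt hv

theorem card_filter_val_le {ι : Type*} [Fintype ι] (a : ι → ZMod N) {t : ℕ} (ht : t < N) :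
    #{j | (a j).val ≤ t} = ∑ v ∈ range (t + 1), #{j | a j = v} := calc
  #{j | (a j).val ≤ t} = ∑ v ∈ range (t + 1), #{j | (a j).val = v} := by
    rw [sum_card_fiberwise_eq_card_filter]
    simp only [mem_range, Nat.lt_succ_iff]
  _ = ∑ v ∈ range (t + 1), #{j | a j = v} := sum_congr rfl fun v hv => by
    simp only [val_eq_iff_eq_natCast ((mem_range.1 hv).trans_le ht)]

end ZMod

theorem IsParkingFunction.le {n : ℕ} {f : Fin n → ℕ+} (hf : IsParkingFunction n f)
    (j : Fin n) : (f j : ℕ) ≤ n := by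
  have hn0 : 0 < n := j.pos
  have hn := hf ⟨n - 1, by omega⟩
  rw [Nat.sub_add_cancel hn0] at hn
  have hall : #{j | (f j : ℕ) ≤ n} = #(univ : Finset (Fin n)) :=
    le_antisymm (card_filter_le _ _) (by simpa using hn)
  exact card_filter_eq_iff.1 hall j (mem_univ j)

section Pollak

variable {n : ℕ}

theorem isParkingFunction_succPNat_val_iff (a : Fin n → ZMod (n + 1)) :
    IsParkingFunction n (fun j => (a j).val.succPNat) ↔
      ∀ k, 0 < k → k < n + 1 → 0 ≤ ∑ i ∈ range k, ((#{j | a j = i} : ℤ) - 1) := by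
  have hcount : ∀ t < n, (#{j | ((a j).val.succPNat : ℕ) ≤ t + 1} : ℤ) - (t + 1) =
      ∑ i ∈ range (t + 1), ((#{j | a j = i} : ℤ) - 1) := fun t ht => by
    simp only [Nat.succPNat_coe, Nat.succ_le_succ_iff,
      ZMod.card_filter_val_le a (by omega : t < n + 1)]
    simp [sum_sub_distrib]
  simp only [IsParkingFunction, Fin.forall_iff]
  constructor
  · intro h k hk0 hk
    obtain ⟨t, rfl⟩ : ∃ t, k = t + 1 := ⟨k - 1, by omega⟩
    have := h t (by omega)
    rw [← hcount t (by omega)]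
    omega
  · intro h t ht
    have := hcount t ht ▸ h (t + 1) (by omega) (by omega)
    omega

theorem existsUnique_vadd_isParkingFunction (a : Fin n → ZMod (n + 1)) :
    ∃! c : ZMod (n + 1), IsParkingFunction n (fun j => ((c +ᵥ a) j).val.succPNat) := by
  set x : ZMod (n + 1) → ℤ := fun d => #{j | a j = d} - 1
  have hx : ∑ d, x d = -1 := by
    have hfibers : ∑ d, #{j | a j = d} = n := by
      simp [sum_card_fiberwise_eq_card_filter]
    simp only [x, sum_sub_distrib, ← Nat.cast_sum, hfibers]
    simp
  refine ((Equiv.neg _).existsUnique_congr fun c => ?_).2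
    (ZMod.existsUnique_forall_sum_range_nonneg x hx)
  simp [isParkingFunction_succPNat_val_iff, x, ← eq_neg_add_iff_add_eq]

end Pollak

/-- The number of classical parking functions of length `n` is `(n+1)^(n-1)`. -/
theorem card_parkingFunctions (n : ℕ) :
    Nat.card {f : Fin n → ℕ+ // IsParkingFunction n f} = (n + 1) ^ (n - 1) := by
  have hlift : Nat.card {a : Fin n → ZMod (n + 1) //
      IsParkingFunction n fun j => (a j).val.succPNat} = Nat.card {f // IsParkingFunction n f} :=
    Nat.card_subtype_comp_eq_of_injective (Nat.succPNat_injective.comp (ZMod.val_injective _)) _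
      fun f hf j => ⟨(f j).natPred, by
        have := (f j).natPred_add_one
        rw [comp_apply, ZMod.val_natCast_of_lt (by grind [hf.le j]), PNat.succPNat_natPred]⟩
  have horbits := AddAction.card_subtype_mul_card_eq_of_existsUnique
    (fun a : Fin n → ZMod (n + 1) => IsParkingFunction n fun j => (a j).val.succPNat)
    existsUnique_vadd_isParkingFunction
  rw [hlift, Nat.card_fun, Nat.card_zmod, Nat.card_fin] at horbits
  rcases n with _ | n
  · simpa using horbits
  · rw [pow_succ] at horbits
    exact Nat.eq_of_mul_eq_mul_right (by omega) horbits
end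

section
/- For every positive integer k, the number of classical k-parking functions of length n, i.e. sequences of positive integers whose increasing rearrangement (b_1,...,b_n) satisfies b_i ≤ (i-1)k+1, equals (kn+1)^(n-1). -/
/-- A classical `k`-parking function of length `n`: a sequence of positive integers whose
increasing rearrangement `(b_1, …, b_n)` satisfies `b_i ≤ (i-1)k + 1`; equivalently, for each
`i : Fin n`, at least `i + 1` of the values are `≤ i·k + 1`. -/
def IsKParkingFunction (n k : ℕ) (f : Fin n → ℕ+) : Prop :=
  ∀ i : Fin n, (i : ℕ) + 1 ≤ (Finset.univ.filter fun j => (f j : ℕ) ≤ (i : ℕ) * k + 1).card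

/-!
Pollak's circular argument. Read a tuple `w : Fin n → ZMod (kn+1)` as `n` cars, each bringing `k`
units of capacity to spot `w j` on a circular street of `kn+1` spots, each spot consuming one
unit. Going once around the circle, the running balance drops by exactly `1`, so among the
`kn+1` rotations of `w` exactly one has a nonnegative running balance from spot `0` onwards
(cycle lemma), and these are exactly the `k`-parking functions shifted down by one. Hence
`(kn+1) · #PF = (kn+1)^n`.
-/

open Finset

namespace KParking

theorem existsUnique_forall_le_add {m : ℕ} (hm : 0 < m) (W : ℕ → ℤ)
    (hW : ∀ t, W (t + m) = W t - 1) :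
    ∃! c, c < m ∧ ∀ t < m, W c ≤ W (c + t) := by
  have no_two_good : ∀ a b, a < b → b < m → (∀ t < m, W a ≤ W (a + t)) →
      ¬ ∀ t < m, W b ≤ W (b + t) := by
    intro a b hab hbm ha hb
    have hab' := ha (b - a) (by omega)
    have hba := hb (a + m - b) (by omega)
    rw [show a + (b - a) = b by omega] at hab'
    rw [show b + (a + m - b) = a + m by omega, hW] at hba
    omega
  have hmin : ∃ c, c < m ∧ ∀ u < m, W c ≤ W u := by
    obtain ⟨c, hc, hc_min⟩ := exists_min_image (range m) W ⟨0, mem_range.2 hm⟩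
    exact ⟨c, mem_range.1 hc, fun u hu => hc_min u (mem_range.2 hu)⟩
  -- the first minimiser: earlier spots are strictly higher, which absorbs the drop by `1`
  obtain ⟨hcm, hc⟩ := Nat.find_spec hmin
  have hlt : ∀ u < Nat.find hmin, W (Nat.find hmin) < W u := by
    intro u hu
    by_contra! hle
    exact Nat.find_min hmin hu ⟨by omega, fun v hv => hle.trans (hc v hv)⟩
  have hgood : ∀ t < m, W (Nat.find hmin) ≤ W (Nat.find hmin + t) := by
    intro t ht
    by_cases h : Nat.find hmin + t < m
    · exact hc _ h
    · have := hlt (Nat.find hmin + t - m) (by omega)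
      rw [show Nat.find hmin + t = Nat.find hmin + t - m + m by omega, hW]
      omega
  refine ⟨Nat.find hmin, ⟨hcm, hgood⟩, fun d ⟨hdm, hd⟩ => ?_⟩
  rcases lt_trichotomy d (Nat.find hmin) with h | h | h
  · exact absurd hgood (no_two_good d _ h hcm hd)
  · exact h
  · exact absurd hd (no_two_good _ d h hdm hgood)

section Walk

variable {ι : Type*} [Fintype ι] {m : ℕ}

/-- Cars preferring one of the first `t` spots of the street `ℕ`, spot `u` being identified with
`u mod m`; past `m` every car is counted again in each round. -/
def preferenceCount (w : ι → ZMod m) (t : ℕ) : ℕ :=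
  ∑ u ∈ range t, #{i | w i = u}

theorem preferenceCount_add (w : ι → ZMod m) (s t : ℕ) :
    preferenceCount w (s + t) =
      preferenceCount w s + preferenceCount (fun i => w i - (s : ZMod m)) t := by
  unfold preferenceCount
  rw [sum_range_add]
  congr 1
  refine sum_congr rfl fun u _ => ?_
  simp only [Nat.cast_add, sub_eq_iff_eq_add']

theorem preferenceCount_of_le [NeZero m] (w : ι → ZMod m) {t : ℕ} (ht : t ≤ m) :
    preferenceCount w t = #{i | (w i).val < t} := by
  rw [card_eq_sum_card_fiberwise (f := fun i => (w i).val) (t := range t)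
    fun i hi => mem_range.2 (mem_filter.1 hi).2]
  refine sum_congr rfl fun u hu => ?_
  have hum : u < m := (mem_range.1 hu).trans_le ht
  rw [filter_filter]
  congr 1
  ext i
  simp only [mem_filter, mem_univ, true_and]
  constructor
  · intro hi
    rw [hi, ZMod.val_cast_of_lt hum]
    exact ⟨mem_range.1 hu, rfl⟩
  · rintro ⟨-, hi⟩
    rw [← hi, ZMod.natCast_zmod_val]

def walk (k : ℕ) (w : ι → ZMod m) (t : ℕ) : ℤ :=
  k * preferenceCount w t - t

theorem walk_add (k : ℕ) (w : ι → ZMod m) (s t : ℕ) :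
    walk k w (s + t) = walk k w s + walk k (fun i => w i - (s : ZMod m)) t := by
  simp only [walk, preferenceCount_add, Nat.cast_add]
  ring

theorem walk_modulus [NeZero m] (k : ℕ) (w : ι → ZMod m) :
    walk k w m = k * Fintype.card ι - m := by
  simp [walk, preferenceCount_of_le w le_rfl, ZMod.val_lt]

theorem walk_add_modulus [NeZero m] (k : ℕ) (w : ι → ZMod m) (t : ℕ) :
    walk k w (t + m) = walk k w t + (k * Fintype.card ι - m) := by
  rw [add_comm, walk_add, walk_modulus]
  simp only [ZMod.natCast_self, sub_zero]
  ring

/-- For `m = k · card ι + 1`, this says that `w` shifted up by one is a `k`-parking function. -/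
def IsParking (k : ℕ) (w : ι → ZMod m) : Prop :=
  ∀ t < m, 0 ≤ walk k w t

theorem isParking_sub_natCast_iff (k : ℕ) (w : ι → ZMod m) (s : ℕ) :
    IsParking k (fun i => w i - (s : ZMod m)) ↔ ∀ t < m, walk k w s ≤ walk k w (s + t) := by
  simp only [IsParking, walk_add, le_add_iff_nonneg_right]

theorem existsUnique_isParking_sub {k : ℕ} (hm : k * Fintype.card ι + 1 = m)
    (w : ι → ZMod m) :
    ∃! c : ZMod m, IsParking k (fun i => w i - c) := by
  have : NeZero m := ⟨by omega⟩
  have hW : ∀ t, walk k w (t + m) = walk k w t - 1 := fun t => by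
    have hm' : (m : ℤ) = k * Fintype.card ι + 1 := by exact_mod_cast hm.symm
    rw [walk_add_modulus, hm']
    ring
  obtain ⟨c, ⟨-, hc⟩, huniq⟩ := existsUnique_forall_le_add (by omega) (walk k w) hW
  refine ⟨c, (isParking_sub_natCast_iff k w c).2 hc, fun d hd => ?_⟩
  rw [← ZMod.natCast_zmod_val d] at hd ⊢
  rw [huniq d.val ⟨d.val_lt, (isParking_sub_natCast_iff k w d.val).1 hd⟩]

theorem card_mul_card_isParking {k : ℕ} (hm : k * Fintype.card ι + 1 = m) :
    m * Nat.card {w : ι → ZMod m // IsParking k w} = m ^ Fintype.card ι := by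
  -- every tuple is uniquely a parking tuple translated by a constant
  have hbij : Function.Bijective
      fun p : ZMod m × {w : ι → ZMod m // IsParking k w} => fun i => p.2.1 i + p.1 := by
    refine ⟨fun ⟨c, w, hw⟩ ⟨c', w', hw'⟩ heq => ?_, fun v => ?_⟩
    · have heq' : ∀ i, w i + c = w' i + c' := congrFun heq
      have hc : c = c' := (existsUnique_isParking_sub hm fun i => w i + c).unique
        (by simpa using hw) (by simpa [heq'] using hw')
      subst hc
      obtain rfl : w = w' := funext fun i => add_right_cancel (heq' i)
      rfl
    · obtain ⟨c, hc, -⟩ := existsUnique_isParking_sub hm v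
      exact ⟨⟨c, _, hc⟩, by simp⟩
  calc m * Nat.card {w : ι → ZMod m // IsParking k w}
      = Nat.card (ZMod m × {w : ι → ZMod m // IsParking k w}) := by
        rw [Nat.card_prod, Nat.card_zmod]
    _ = Nat.card (ι → ZMod m) := Nat.card_congr (Equiv.ofBijective _ hbij)
    _ = m ^ Fintype.card ι := by rw [Nat.card_fun, Nat.card_zmod, Nat.card_eq_fintype_card]

end Walk

theorem _root_.IsKParkingFunction.le {n k : ℕ} {f : Fin n → ℕ+}
    (hf : IsKParkingFunction n k f) (j : Fin n) : (f j : ℕ) ≤ (n - 1) * k + 1 := by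
  have hlast := hf ⟨n - 1, Nat.sub_one_lt_of_lt j.isLt⟩
  have hcard : #{j | (f j : ℕ) ≤ (n - 1) * k + 1} = #(univ : Finset (Fin n)) :=
    le_antisymm (card_le_univ _) (by simpa [Nat.sub_add_cancel j.pos] using hlast)
  exact filter_card_eq hcard j (mem_univ j)

theorem _root_.IsKParkingFunction.natPred_lt {n k : ℕ} {f : Fin n → ℕ+}
    (hf : IsKParkingFunction n k f) (j : Fin n) : (f j).natPred < k * n + 1 := by
  have hle := hf.le j
  have : (n - 1) * k ≤ k * n := by rw [mul_comm]; exact Nat.mul_le_mul_left k (Nat.sub_le n 1)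
  rw [PNat.natPred]
  omega

theorem isKParkingFunction_iff {n k : ℕ} (hk : 1 ≤ k) (f : Fin n → ℕ+) :
    IsKParkingFunction n k f ↔ ∀ t < k * n + 1, t ≤ k * #{j | (f j : ℕ) ≤ t} := by
  constructor
  · intro hf t ht
    rcases Nat.eq_zero_or_pos t with rfl | htpos
    · exact Nat.zero_le _
    -- write `t - 1 = k i + r` with `r < k`: at least `i + 1` values are `≤ i k + 1 ≤ t`
    obtain ⟨i, r, hdecomp, hr⟩ : ∃ i r, t - 1 = k * i + r ∧ r < k :=
      ⟨_, _, (Nat.div_add_mod (t - 1) k).symm, Nat.mod_lt _ hk⟩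
    have hin : i < n := Nat.lt_of_mul_lt_mul_left (a := k) (by omega)
    have hmono : #{j | (f j : ℕ) ≤ i * k + 1} ≤ #{j | (f j : ℕ) ≤ t} :=
      card_le_card (monotone_filter_right _ fun j _ hj => by rw [mul_comm] at hj; omega)
    have hblock : i + 1 ≤ #{j | (f j : ℕ) ≤ i * k + 1} := hf ⟨i, hin⟩
    have := Nat.mul_le_mul_left k (hblock.trans hmono)
    rw [mul_add] at this
    omega
  · intro h i
    have hi : (i : ℕ) * k + 1 < k * n + 1 := by nlinarith [i.isLt]
    have := h _ hi
    by_contra! hlt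
    nlinarith

theorem isParking_iff_isKParkingFunction {n k : ℕ} (hk : 1 ≤ k)
    (w : Fin n → ZMod (k * n + 1)) :
    IsParking k w ↔ IsKParkingFunction n k fun j => (w j).val.succPNat := by
  rw [isKParkingFunction_iff hk]
  refine forall₂_congr fun t ht => ?_
  simp only [walk, preferenceCount_of_le w ht.le, Nat.succPNat_coe, Nat.succ_le_iff, sub_nonneg]
  norm_cast

def kParkingFunctionEquivIsParking {n k : ℕ} (hk : 1 ≤ k) :
    {f : Fin n → ℕ+ // IsKParkingFunction n k f} ≃
      {w : Fin n → ZMod (k * n + 1) // IsParking k w} where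
  toFun f := ⟨fun j => (f.1 j).natPred, by
    rw [isParking_iff_isKParkingFunction hk]
    convert f.2 using 1
    exact funext fun j => by rw [ZMod.val_cast_of_lt (f.2.natPred_lt j), PNat.succPNat_natPred]⟩
  invFun w := ⟨fun j => (w.1 j).val.succPNat, (isParking_iff_isKParkingFunction hk w.1).1 w.2⟩
  left_inv f := Subtype.ext <| funext fun j => by
    simp only [ZMod.val_cast_of_lt (f.2.natPred_lt j), PNat.succPNat_natPred]
  right_inv w := Subtype.ext <| funext fun j => by
    simp only [Nat.natPred_succPNat, ZMod.natCast_zmod_val]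

end KParking

open KParking in
/-- The number of classical `k`-parking functions of length `n` is `(kn+1)^(n-1)`. -/
theorem card_kParkingFunctions (n k : ℕ) (hk : 1 ≤ k) :
    Nat.card {f : Fin n → ℕ+ // IsKParkingFunction n k f} = (k * n + 1) ^ (n - 1) := by
  have hcount := card_mul_card_isParking (ι := Fin n) (k := k) (m := k * n + 1) (by simp)
  rw [Fintype.card_fin, ← Nat.card_congr (kParkingFunctionEquivIsParking hk)] at hcount
  cases n with
  | zero => simpa using hcount
  | succ n =>
    rw [pow_succ'] at hcount
    exact Nat.eq_of_mul_eq_mul_left (Nat.succ_pos _) hcount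
end

section
/- The number of type A_{n-1} noncrossing parking functions, i.e. pairs consisting of a noncrossing partition {B_1,...,B_r} of [n] together with a set partition {L_1,...,L_r} of [n] with |B_i| = |L_i| for each i (where the L_i are assigned to the blocks B_i), equals (n+1)^(n-1). -/
/-!
A noncrossing parking function `(π, L)` is sent to the map `f` taking a label `i` to the minimum
of the block `B` with `i ∈ L_B`. Then `f` is a parking function, and `f⁻¹(m)` has the size of the
block with minimum `m`. These block sizes `w` determine a noncrossing partition: the block of `j`
starts at the largest `m ≤ j` such that the blocks starting in `[m, j]` have total size at least
`j + 1 - m`. Run on the fibre sizes of an arbitrary parking function `f`, this recipe yields a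
noncrossing partition whose block with minimum `m` can be labelled by `f⁻¹(m)`, so `(π, L) ↦ f` is
a bijection onto parking functions. These are counted by Pollak's argument: of the `n + 1`
rotations `x + c` of any `x : Fin n → ZMod (n + 1)`, exactly one is a parking function.
-/

open Finset

def IsNoncrossing (n : ℕ) (π : Finpartition (Finset.univ : Finset (Fin n))) : Prop :=
  ∀ a b c d : Fin n, a < b → b < c → c < d →
    ∀ B ∈ π.parts, ∀ B' ∈ π.parts, a ∈ B → c ∈ B → b ∈ B' → d ∈ B' → B = B'

namespace NoncrossingParking

lemma card_filter_comp_eq_of_card_fiber_eq {α β : Type*} [Fintype α] [Fintype β] [DecidableEq β]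
    {f g : α → β} (h : ∀ b, #{a | f a = b} = #{a | g a = b}) (P : β → Prop) [DecidablePred P] :
    #{a | P (f a)} = #{a | P (g a)} := by
  have key := fun u : α → β => sum_card_fiberwise_eq_card_filter univ {b | P b} u
  simp only [mem_filter, mem_univ, true_and] at key
  rw [← key f, ← key g]
  exact sum_congr rfl fun b _ => h b

theorem existsUnique_lt_forall_le_add {N : ℕ} (hN : 0 < N) (F : ℕ → ℤ)
    (hF : ∀ t, F (t + N) = F t - 1) : ∃! c, c < N ∧ ∀ k < N, F c ≤ F (c + k) := by
  have hmin : ∃ c, c < N ∧ ∀ j < N, F c ≤ F j := by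
    obtain ⟨c, hc, hle⟩ := (range N).exists_min_image F (nonempty_range_iff.2 hN.ne')
    exact ⟨c, mem_range.1 hc, fun j hj => hle j (mem_range.2 hj)⟩
  set c := Nat.find hmin
  obtain ⟨hcN, hcmin⟩ : c < N ∧ ∀ j < N, F c ≤ F j := Nat.find_spec hmin
  -- `c` is the first minimum of `F` on `[0, N)`, so it is a strict minimum on `[0, c)`
  have hfirst : ∀ j < c, F c < F j := fun j hj => by
    have hj' : ¬ ∀ k < N, F j ≤ F k := fun h => Nat.find_min hmin hj ⟨hj.trans hcN, h⟩
    push Not at hj'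
    obtain ⟨k, hk, hlt⟩ := hj'
    exact (hcmin k hk).trans_lt hlt
  have hnot_two : ∀ a b, a < b → b < N → (∀ k < N, F a ≤ F (a + k)) →
      (∀ k < N, F b ≤ F (b + k)) → False := fun a b hab hbN ha hb => by
    have h1 := ha (b - a) (by omega)
    have h2 := hb (a + N - b) (by omega)
    rw [show a + (b - a) = b by omega] at h1
    rw [show b + (a + N - b) = a + N by omega, hF] at h2
    omega
  have hc : ∀ k < N, F c ≤ F (c + k) := fun k hk => by
    rcases lt_or_ge (c + k) N with h | h
    · exact hcmin _ h
    · have := hF (c + k - N)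
      rw [Nat.sub_add_cancel h] at this
      have := hfirst (c + k - N) (by omega)
      omega
  refine ⟨c, ⟨hcN, hc⟩, fun c' ⟨hc'N, hc'⟩ => ?_⟩
  rcases lt_trichotomy c' c with h | h | h
  · exact (hnot_two _ _ h hcN hc' hc).elim
  · exact h
  · exact (hnot_two _ _ h hc'N hc hc').elim

variable {n : ℕ}

def IsParking (f : Fin n → Fin n) : Prop :=
  ∀ k ≤ n, k ≤ #{j | (f j : ℕ) < k}

-- `x` lists preferred spots on a circular street with `n + 1` spots, cut open at spot `c`
def IsParkingFrom (x : Fin n → ZMod (n + 1)) (c : ZMod (n + 1)) : Prop :=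
  ∀ k ≤ n, k ≤ #{i | (x i - c).val < k}

def cumulativeCount (x : Fin n → ZMod (n + 1)) (t : ℕ) : ℕ :=
  ∑ j ∈ range t, #{i | x i = j}

lemma cumulativeCount_add (x : Fin n → ZMod (n + 1)) (t : ℕ) {k : ℕ} (hk : k ≤ n + 1) :
    cumulativeCount x (t + k) = cumulativeCount x t + #{i | (x i - t).val < k} := by
  rw [cumulativeCount, cumulativeCount, sum_range_add, card_eq_sum_card_fiberwise
    (f := fun i => (x i - t).val) (t := range k) (fun i hi => by simpa using hi)]
  congr 1
  refine sum_congr rfl fun j hj => ?_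
  rw [filter_filter]
  refine congrArg card (filter_congr fun i _ => ?_)
  have hval : (x i - t).val = j ↔ x i = ((t + j : ℕ) : ZMod (n + 1)) := by
    rw [Nat.cast_add, ← sub_eq_iff_eq_add']
    exact ⟨fun h => by rw [← h, ZMod.natCast_zmod_val],
      fun h => by rw [h, ZMod.val_cast_of_lt ((mem_range.1 hj).trans_le hk)]⟩
  rw [← hval]
  exact ⟨fun h => ⟨h ▸ mem_range.1 hj, h⟩, And.right⟩

lemma cumulativeCount_add_period (x : Fin n → ZMod (n + 1)) (t : ℕ) :
    cumulativeCount x (t + (n + 1)) = cumulativeCount x t + n := by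
  rw [cumulativeCount_add x t le_rfl, filter_true_of_mem fun i _ => ZMod.val_lt _, card_univ,
    Fintype.card_fin]

def surplus (x : Fin n → ZMod (n + 1)) (t : ℕ) : ℤ := cumulativeCount x t - t

lemma surplus_add_period (x : Fin n → ZMod (n + 1)) (t : ℕ) :
    surplus x (t + (n + 1)) = surplus x t - 1 := by
  rw [surplus, surplus, cumulativeCount_add_period]
  push_cast
  ring

lemma isParkingFrom_iff (x : Fin n → ZMod (n + 1)) (c : ZMod (n + 1)) :
    IsParkingFrom x c ↔ ∀ k < n + 1, surplus x c.val ≤ surplus x (c.val + k) := by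
  refine forall_congr' fun k => ?_
  rw [Nat.lt_succ_iff]
  refine imp_congr_right fun hk => ?_
  rw [surplus, surplus, cumulativeCount_add x c.val (by omega), ZMod.natCast_zmod_val]
  push_cast
  omega

theorem existsUnique_isParkingFrom (x : Fin n → ZMod (n + 1)) : ∃! c, IsParkingFrom x c := by
  obtain ⟨c, ⟨hc, hgood⟩, huniq⟩ :=
    existsUnique_lt_forall_le_add n.succ_pos (surplus x) (surplus_add_period x)
  refine ⟨c, ?_, fun c' hc' => ?_⟩
  · show IsParkingFrom x c
    rw [isParkingFrom_iff, ZMod.val_cast_of_lt hc]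
    exact hgood
  · rw [← ZMod.natCast_zmod_val c', huniq c'.val ⟨c'.val_lt, (isParkingFrom_iff x c').1 hc'⟩]

def rotateParking (p : ZMod (n + 1) × {f : Fin n → Fin n // IsParking f}) :
    Fin n → ZMod (n + 1) :=
  fun i => ((p.2.1 i : ℕ) : ZMod (n + 1)) + p.1

lemma val_rotateParking_sub (c : ZMod (n + 1)) (f : {f : Fin n → Fin n // IsParking f})
    (i : Fin n) : (rotateParking (c, f) i - c).val = f.1 i := by
  rw [rotateParking, add_sub_cancel_right, ZMod.val_cast_of_lt (by omega)]

lemma isParkingFrom_rotateParking (c : ZMod (n + 1)) (f : {f : Fin n → Fin n // IsParking f}) :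
    IsParkingFrom (rotateParking (c, f)) c := by
  simp only [IsParkingFrom, val_rotateParking_sub]
  exact f.2

theorem rotateParking_bijective : Function.Bijective (rotateParking (n := n)) := by
  refine ⟨fun ⟨c, f⟩ ⟨c', f'⟩ h => ?_, fun x => ?_⟩
  · obtain rfl : c = c' := (existsUnique_isParkingFrom _).unique
      (isParkingFrom_rotateParking c f) (h ▸ isParkingFrom_rotateParking c' f')
    obtain rfl : f = f' := Subtype.ext <| funext fun i => Fin.ext <| by
      rw [← val_rotateParking_sub c f, ← val_rotateParking_sub c f', h]
    rfl
  · obtain ⟨c, hc, -⟩ := existsUnique_isParkingFrom x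
    -- at `k = n` the parking condition forces every car to prefer one of the first `n` spots
    have hlt : ∀ i, (x i - c).val < n := fun i => card_filter_eq_iff.1
      ((card_filter_le _ _).antisymm (by simpa using hc n le_rfl)) i (mem_univ i)
    refine ⟨(c, ⟨fun i => ⟨_, hlt i⟩, hc⟩), funext fun i => ?_⟩
    simp [rotateParking]

theorem card_isParking : Nat.card {f : Fin n → Fin n // IsParking f} = (n + 1) ^ (n - 1) := by
  have h := Nat.card_eq_of_bijective _ (rotateParking_bijective (n := n))
  rw [Nat.card_prod, Nat.card_zmod, Nat.card_eq_fintype_card (α := Fin n → _), Fintype.card_fun,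
    ZMod.card, Fintype.card_fin] at h
  refine Nat.eq_of_mul_eq_mul_left n.succ_pos (h.trans ?_)
  cases n <;> simp [pow_succ']

section BlockStart

variable (w : ℕ → ℕ)

def Covers (i m : ℕ) : Prop := i + 1 ≤ m + ∑ l ∈ Ico m (i + 1), w l

instance (i : ℕ) : DecidablePred (Covers w i) := fun _ => inferInstanceAs (Decidable (_ ≤ _))

def blockStart (i : ℕ) : ℕ := Nat.findGreatest (Covers w i) i

variable {w}

lemma blockStart_le (i : ℕ) : blockStart w i ≤ i := Nat.findGreatest_le i

lemma covers_blockStart {n : ℕ} (hw : ∀ k ≤ n, k ≤ ∑ l ∈ range k, w l) {i : ℕ} (hi : i < n) :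
    Covers w i (blockStart w i) :=
  Nat.findGreatest_spec (Nat.zero_le i) <| by
    simpa [Covers, ← Nat.Ico_zero_eq_range] using hw (i + 1) hi

lemma not_covers_of_blockStart_lt {i m : ℕ} (h : blockStart w i < m) (hm : m ≤ i) :
    ¬ Covers w i m :=
  Nat.findGreatest_is_greatest h hm

lemma blockStart_eq_self {m : ℕ} (hm : 0 < w m) : blockStart w m = m :=
  Nat.findGreatest_eq <| by simpa [Covers, Nat.one_le_iff_ne_zero, pos_iff_ne_zero] using hm

lemma weight_blockStart_pos {n : ℕ} (hw : ∀ k ≤ n, k ≤ ∑ l ∈ range k, w l) {i : ℕ}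
    (hi : i < n) : 0 < w (blockStart w i) := by
  have hcov := covers_blockStart hw hi
  rw [Covers, sum_eq_sum_Ico_succ_bot (Order.lt_add_one_iff.2 (blockStart_le i))] at hcov
  rcases (blockStart_le (w := w) i).eq_or_lt with heq | hlt
  · rw [heq, Ico_self, sum_empty] at hcov
    rw [heq]
    omega
  · by_contra h0
    exact not_covers_of_blockStart_lt (lt_add_one _) hlt (by rw [Covers]; omega)

lemma blockStart_le_or_lt_blockStart {n : ℕ} (hw : ∀ k ≤ n, k ≤ ∑ l ∈ range k, w l) {i i' : ℕ}
    (hii' : i < i') (hi' : i' < n) : blockStart w i' ≤ blockStart w i ∨ i < blockStart w i' := by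
  by_contra! h
  have hnot := not_covers_of_blockStart_lt h.1 h.2
  have hcov := covers_blockStart hw hi'
  rw [Covers, ← sum_Ico_consecutive _ (by omega : blockStart w i' ≤ i + 1) (by omega)] at hcov
  have : Covers w i' (i + 1) := by rw [Covers] at hnot ⊢; omega
  have := Nat.le_findGreatest (by omega : i + 1 ≤ i') this
  rw [← blockStart] at this
  omega

def excess (w : ℕ → ℕ) (m j : ℕ) : ℕ := m + ∑ l ∈ Ico m (j + 1), w l - (j + 1)

lemma excess_lt_excess {n : ℕ} (hw : ∀ k ≤ n, k ≤ ∑ l ∈ range k, w l) {m a b : ℕ}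
    (ha : blockStart w a = m) (hb : blockStart w b = m) (hab : a < b) (hbn : b < n) :
    excess w m b < excess w m a := by
  have hma : m ≤ a := ha ▸ blockStart_le a
  have hcov := covers_blockStart hw hbn
  have hnot := not_covers_of_blockStart_lt (w := w) (m := a + 1) (by omega) hab
  have hsplit := sum_Ico_consecutive w (by omega : m ≤ a + 1) (by omega : a + 1 ≤ b + 1)
  rw [hb] at hcov
  simp only [Covers] at hcov hnot
  simp only [excess]
  omega

lemma excess_lt_weight {n : ℕ} (hw : ∀ k ≤ n, k ≤ ∑ l ∈ range k, w l) {m a : ℕ}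
    (ha : blockStart w a = m) (han : a < n) : excess w m a < w m := by
  have hma : m ≤ a := ha ▸ blockStart_le a
  have hpos := weight_blockStart_pos hw han
  rw [ha] at hpos
  rw [excess, sum_eq_sum_Ico_succ_bot (by omega : m < a + 1)]
  rcases hma.eq_or_lt with rfl | hma
  · simp only [Ico_self, sum_empty]
    omega
  · have hnot := not_covers_of_blockStart_lt (w := w) (m := m + 1) (by omega) hma
    rw [Covers] at hnot
    omega

lemma card_filter_blockStart_le {n : ℕ} (hw : ∀ k ≤ n, k ≤ ∑ l ∈ range k, w l) (m : ℕ) :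
    #{j : Fin n | blockStart w j = m} ≤ w m := by
  calc #{j : Fin n | blockStart w j = m}
      ≤ #(range (w m)) := by
        refine card_le_card_of_injOn (fun j => excess w m j) (fun a ha => ?_)
          fun a ha b hb hab => ?_
        · simpa using excess_lt_weight hw (mem_filter.1 ha).2 a.isLt
        · have ha := (mem_filter.1 ha).2
          have hb := (mem_filter.1 hb).2
          rcases lt_trichotomy a b with h | h | h
          · exact absurd hab (excess_lt_excess hw ha hb h b.isLt).ne'
          · exact h
          · exact absurd hab (excess_lt_excess hw hb ha h a.isLt).ne
    _ = w m := card_range _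

lemma card_filter_blockStart {n : ℕ} (hw : ∀ k ≤ n, k ≤ ∑ l ∈ range k, w l)
    (hsum : ∑ l ∈ range n, w l = n) {m : ℕ} (hm : m < n) :
    #{j : Fin n | blockStart w j = m} = w m := by
  refine (sum_eq_sum_iff_of_le fun m _ => card_filter_blockStart_le hw m).1 ?_ m (mem_range.2 hm)
  rw [hsum, sum_card_fiberwise_eq_card_filter, filter_true_of_mem, card_univ, Fintype.card_fin]
  exact fun j _ => mem_range.2 ((blockStart_le j).trans_lt j.isLt)

end BlockStart

section Partition

variable {n : ℕ} (π : Finpartition (univ : Finset (Fin n)))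

def partMin (B : {B // B ∈ π.parts}) : Fin n := B.1.min' (π.nonempty_of_mem_parts B.2)

def partOf (j : Fin n) : {B // B ∈ π.parts} := ⟨π.part j, π.part_mem.2 (mem_univ j)⟩

def blockMin (j : Fin n) : Fin n := partMin π (partOf π j)

variable {π}

lemma mem_partOf (j : Fin n) : j ∈ (partOf π j).1 := π.mem_part (mem_univ j)

lemma partOf_eq_iff {j : Fin n} {B : {B // B ∈ π.parts}} : partOf π j = B ↔ j ∈ B.1 :=
  Subtype.ext_iff.trans (π.part_eq_iff_mem B.2)

lemma partMin_mem (B : {B // B ∈ π.parts}) : partMin π B ∈ B.1 := min'_mem _ _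

lemma partMin_injective : Function.Injective (partMin π) := fun B B' h =>
  Subtype.ext <| π.eq_of_mem_parts B.2 B'.2 (partMin_mem B) (h ▸ partMin_mem B')

lemma blockMin_le (j : Fin n) : blockMin π j ≤ j := min'_le _ _ (mem_partOf j)

lemma partOf_blockMin (j : Fin n) : partOf π (blockMin π j) = partOf π j :=
  partOf_eq_iff.2 (partMin_mem _)

lemma blockMin_eq_iff {a b : Fin n} : blockMin π a = blockMin π b ↔ partOf π a = partOf π b :=
  ⟨fun h => by rw [← partOf_blockMin a, h, partOf_blockMin], fun h => by rw [blockMin, h, blockMin]⟩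

lemma blockMin_eq_partMin_iff {j : Fin n} {B : {B // B ∈ π.parts}} :
    blockMin π j = partMin π B ↔ j ∈ B.1 :=
  partMin_injective.eq_iff.trans partOf_eq_iff

lemma blockMin_blockMin (j : Fin n) : blockMin π (blockMin π j) = blockMin π j := by
  rw [blockMin, partOf_blockMin, blockMin]

lemma _root_.IsNoncrossing.le_of_blockMin_lt (h : IsNoncrossing n π) {a b : Fin n}
    (hmin : blockMin π a < blockMin π b) (hb : blockMin π b < a) : b ≤ a := by
  by_contra! hab
  refine hmin.ne (blockMin_eq_iff.2 (Subtype.ext ?_))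
  exact h _ _ _ _ hmin hb hab _ (partOf π a).2 _ (partOf π b).2 (partMin_mem _) (mem_partOf a)
    (partMin_mem _) (mem_partOf b)

lemma mem_parts_iff_exists_blockMin {B : Finset (Fin n)} :
    B ∈ π.parts ↔ ∃ j, ({i | blockMin π i = blockMin π j} : Finset _) = B := by
  have hpart : ∀ j, ({i | blockMin π i = blockMin π j} : Finset _) = (partOf π j).1 := fun j => by
    ext i
    simp [blockMin_eq_iff, partOf_eq_iff]
  simp only [hpart]
  refine ⟨fun hB => ?_, fun ⟨j, hj⟩ => hj ▸ (partOf π j).2⟩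
  obtain ⟨j, hj⟩ := π.nonempty_of_mem_parts hB
  exact ⟨j, congrArg Subtype.val ((partOf_eq_iff (B := ⟨B, hB⟩)).2 hj)⟩

lemma eq_of_blockMin_eq {π' : Finpartition (univ : Finset (Fin n))}
    (h : blockMin π = blockMin π') : π = π' :=
  Finpartition.ext <| Finset.ext fun B => by simp only [mem_parts_iff_exists_blockMin, h]

def weight (g : Fin n → Fin n) (m : ℕ) : ℕ := #{j | (g j : ℕ) = m}

lemma sum_Ico_weight (g : Fin n → Fin n) (a b : ℕ) :
    ∑ l ∈ Ico a b, weight g l = #{j | a ≤ (g j : ℕ) ∧ (g j : ℕ) < b} := by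
  simpa [weight] using sum_card_fiberwise_eq_card_filter univ (Ico a b) fun j => (g j : ℕ)

lemma sum_range_weight (g : Fin n → Fin n) (k : ℕ) :
    ∑ l ∈ range k, weight g l = #{j | (g j : ℕ) < k} := by
  simpa [weight] using sum_card_fiberwise_eq_card_filter univ (range k) fun j => (g j : ℕ)

lemma _root_.IsNoncrossing.covers_blockMin (h : IsNoncrossing n π) (j : Fin n) :
    Covers (weight (blockMin π)) j (blockMin π j) := by
  -- every `x ∈ [min B, j]` lies in a block with minimum in `[min B, j]`
  have hsub : Icc (blockMin π j) j ⊆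
      ({x | (blockMin π j : ℕ) ≤ blockMin π x ∧ (blockMin π x : ℕ) < j + 1} : Finset _) := by
    intro x hx
    rw [mem_Icc] at hx
    refine mem_filter.2 ⟨mem_univ x, ?_, Nat.lt_succ_of_le ((blockMin_le x).trans hx.2)⟩
    by_contra! hlt
    have hjx : blockMin π j < x := lt_of_le_of_ne hx.1 fun he => by
      rw [← he, blockMin_blockMin] at hlt
      exact lt_irrefl _ hlt
    rw [le_antisymm hx.2 (h.le_of_blockMin_lt hlt hjx)] at hlt
    exact lt_irrefl _ hlt
  have := card_le_card hsub
  rw [Fin.card_Icc] at this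
  rw [Covers, sum_Ico_weight]
  omega

lemma _root_.IsNoncrossing.not_covers (h : IsNoncrossing n π) {j : Fin n} {m : ℕ}
    (hjm : blockMin π j < m) (hmj : m ≤ j) : ¬ Covers (weight (blockMin π)) j m := by
  -- the blocks with minimum in `[m, j]` lie inside `[m, j)`
  have hsub : ({x | m ≤ (blockMin π x : ℕ) ∧ (blockMin π x : ℕ) < j + 1} : Finset _) ⊆
      Ico ⟨m, hmj.trans_lt j.isLt⟩ j := by
    intro x hx
    obtain ⟨h1, h2⟩ := (mem_filter.1 hx).2
    refine mem_Ico.2 ⟨Fin.le_def.2 (h1.trans (blockMin_le x)), ?_⟩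
    by_contra! hjx
    have hne : blockMin π j < blockMin π x := Fin.lt_def.2 (by omega)
    have hxj : blockMin π x < j := lt_of_le_of_ne (Fin.le_def.2 (by omega)) fun he => by
      rw [← he, blockMin_blockMin] at hne
      exact lt_irrefl _ hne
    have hjx' : j < x := lt_of_le_of_ne hjx fun he => by
      rw [he] at hne
      exact lt_irrefl _ hne
    exact (h.le_of_blockMin_lt hne hxj).not_gt hjx'
  have := card_le_card hsub
  rw [Fin.card_Ico] at this
  rw [Covers, sum_Ico_weight]
  simp only at this
  omega

theorem _root_.IsNoncrossing.blockStart_weight_blockMin (h : IsNoncrossing n π) (j : Fin n) :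
    blockStart (weight (blockMin π)) j = blockMin π j :=
  Nat.findGreatest_eq_iff.2
    ⟨blockMin_le j, fun _ => h.covers_blockMin j, fun _ hjm hmj => h.not_covers hjm hmj⟩

end Partition

section BlockPartition

variable {n : ℕ} {w : ℕ → ℕ}

instance : DecidableRel (Setoid.ker fun j : Fin n => blockStart w j) :=
  fun a b => inferInstanceAs (Decidable (blockStart w a = blockStart w b))

variable (n w) in
def blockPartition : Finpartition (univ : Finset (Fin n)) :=
  Finpartition.ofSetoid (Setoid.ker fun j : Fin n => blockStart w j)

lemma mem_partOf_blockPartition {i j : Fin n} :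
    i ∈ (partOf (blockPartition n w) j).1 ↔ blockStart w j = blockStart w i :=
  Finpartition.mem_part_ofSetoid_iff_rel

lemma blockMin_blockPartition (hw : ∀ k ≤ n, k ≤ ∑ l ∈ range k, w l) (j : Fin n) :
    (blockMin (blockPartition n w) j : ℕ) = blockStart w j := by
  have hstart : blockStart w (blockStart w j) = blockStart w j :=
    blockStart_eq_self (weight_blockStart_pos hw j.isLt)
  have hmem : blockMin (blockPartition n w) j ∈ (partOf (blockPartition n w) j).1 := partMin_mem _
  rw [mem_partOf_blockPartition] at hmem
  refine le_antisymm ?_ (hmem ▸ blockStart_le _)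
  exact Fin.le_def.1 <| min'_le _ ⟨blockStart w j, (blockStart_le j).trans_lt j.isLt⟩ <|
    mem_partOf_blockPartition.2 hstart.symm

lemma card_eq_weight_partMin (hw : ∀ k ≤ n, k ≤ ∑ l ∈ range k, w l)
    (hsum : ∑ l ∈ range n, w l = n) (B : {B // B ∈ (blockPartition n w).parts}) :
    #B.1 = w (partMin _ B) := by
  rw [← card_filter_blockStart hw hsum (partMin _ B).isLt]
  congr 1
  ext j
  simp [← blockMin_blockPartition hw, Fin.val_inj, blockMin_eq_partMin_iff]

theorem isNoncrossing_blockPartition (hw : ∀ k ≤ n, k ≤ ∑ l ∈ range k, w l) :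
    IsNoncrossing n (blockPartition n w) := by
  intro a b c d hab hbc hcd B hB B' hB' haB hcB hbB' hdB'
  have hstart : ∀ {x y : Fin n} {B}, B ∈ (blockPartition n w).parts → x ∈ B → y ∈ B →
      blockStart w x = blockStart w y := fun hB hx hy =>
    mem_partOf_blockPartition.1 (by rwa [(partOf_eq_iff (B := ⟨_, hB⟩)).2 hx])
  have hac := hstart hB haB hcB
  have hbd := hstart hB' hbB' hdB'
  have h1 := blockStart_le_or_lt_blockStart hw hbc c.isLt
  have h2 := blockStart_le_or_lt_blockStart hw hcd d.isLt
  have := blockStart_le (w := w) a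
  have := blockStart_le (w := w) b
  rw [Fin.lt_def] at hab hbc hcd
  have hbc' : blockStart w b = blockStart w c := by omega
  have hcB' : c ∈ (partOf (blockPartition n w) b).1 := mem_partOf_blockPartition.2 hbc'
  rw [(partOf_eq_iff (B := ⟨_, hB'⟩)).2 hbB'] at hcB'
  exact (blockPartition n w).eq_of_mem_parts hB hB' hcB hcB'

end BlockPartition

section ParkingBijection

variable {n : ℕ}

abbrev NoncrossingParkingFunction (n : ℕ) :=
  {p : Σ π : Finpartition (Finset.univ : Finset (Fin n)), ({B // B ∈ π.parts} → Finset (Fin n)) //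
    IsNoncrossing n p.1 ∧
    (∀ B, (p.2 B).card = B.1.card) ∧
    (∀ B B', B ≠ B' → Disjoint (p.2 B) (p.2 B')) ∧
    (∀ i : Fin n, ∃ B, i ∈ p.2 B)}

variable (p : NoncrossingParkingFunction n)

noncomputable def labelBlock (i : Fin n) : {B // B ∈ p.1.1.parts} := (p.2.2.2.2 i).choose

lemma mem_labelBlock (i : Fin n) : i ∈ p.1.2 (labelBlock p i) := (p.2.2.2.2 i).choose_spec

lemma labelBlock_eq_iff {i : Fin n} {B : {B // B ∈ p.1.1.parts}} :
    labelBlock p i = B ↔ i ∈ p.1.2 B :=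
  ⟨fun h => h ▸ mem_labelBlock p i, fun hi => by_contra fun h =>
    disjoint_left.1 (p.2.2.2.1 _ _ h) (mem_labelBlock p i) hi⟩

noncomputable def toParking (i : Fin n) : Fin n := partMin p.1.1 (labelBlock p i)

lemma card_filter_toParking (P : Fin n → Prop) [DecidablePred P] :
    #{i | P (toParking p i)} = #{j | P (blockMin p.1.1 j)} := by
  refine card_filter_comp_eq_of_card_fiber_eq (fun B => ?_) (P ∘ partMin p.1.1)
  have hL : ({i | labelBlock p i = B} : Finset _) = p.1.2 B := by
    ext i
    simp [labelBlock_eq_iff]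
  have hB : ({j | partOf p.1.1 j = B} : Finset _) = B.1 := by
    ext j
    simp [partOf_eq_iff]
  rw [hL, hB, p.2.2.1 B]

lemma weight_toParking : weight (toParking p) = weight (blockMin p.1.1) :=
  funext fun m => card_filter_toParking p fun x => (x : ℕ) = m

lemma isParking_toParking : IsParking (toParking p) := fun k hk => by
  rw [card_filter_toParking p fun x => (x : ℕ) < k]
  calc k = #{j : Fin n | (j : ℕ) < k} := by rw [Fin.card_filter_val_lt, min_eq_right hk]
    _ ≤ #{j | (blockMin p.1.1 j : ℕ) < k} := card_le_card fun j hj =>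
      mem_filter.2 ⟨mem_univ _, (Fin.le_def.1 (blockMin_le j)).trans_lt (mem_filter.1 hj).2⟩

lemma label_eq_filter (B : {B // B ∈ p.1.1.parts}) :
    p.1.2 B = ({i | toParking p i = partMin p.1.1 B} : Finset _) := by
  ext i
  simp [toParking, partMin_injective.eq_iff, labelBlock_eq_iff]

theorem toParking_injective : Function.Injective (toParking (n := n)) := by
  intro p q h
  have hmin : blockMin p.1.1 = blockMin q.1.1 := funext fun j => Fin.ext <| by
    rw [← p.2.1.blockStart_weight_blockMin, ← q.2.1.blockStart_weight_blockMin,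
      ← weight_toParking, ← weight_toParking, h]
  obtain ⟨⟨π, L⟩, hp⟩ := p
  obtain ⟨⟨π', L'⟩, hq⟩ := q
  obtain rfl := eq_of_blockMin_eq hmin
  obtain rfl : L = L' := funext fun B =>
    (label_eq_filter ⟨⟨π, L⟩, hp⟩ B).trans (h ▸ (label_eq_filter ⟨⟨π, L'⟩, hq⟩ B).symm)
  rfl

variable {g : Fin n → Fin n}

lemma sum_range_weight_le (hg : IsParking g) : ∀ k ≤ n, k ≤ ∑ l ∈ range k, weight g l :=
  fun k hk => by rw [sum_range_weight]; exact hg k hk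

lemma sum_range_weight_self (g : Fin n → Fin n) : ∑ l ∈ range n, weight g l = n := by
  rw [sum_range_weight, filter_true_of_mem fun j _ => (g j).isLt, card_univ, Fintype.card_fin]

def ofParking (hg : IsParking g) : NoncrossingParkingFunction n := by
  refine ⟨⟨blockPartition n (weight g), fun B => {i | g i = partMin _ B}⟩,
    isNoncrossing_blockPartition (sum_range_weight_le hg), fun B => ?_, fun B B' hBB' => ?_,
    fun i => ⟨partOf _ (g i), ?_⟩⟩
  · rw [card_eq_weight_partMin (sum_range_weight_le hg) (sum_range_weight_self g)]
    simp [weight, Fin.val_inj]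
  · refine disjoint_left.2 fun i hi hi' => hBB' (partMin_injective ?_)
    rw [← (mem_filter.1 hi).2, (mem_filter.1 hi').2]
  · have hpos : 0 < weight g (g i) := card_pos.2 ⟨i, by simp⟩
    refine mem_filter.2 ⟨mem_univ i, Fin.ext ?_⟩
    rw [← blockMin, blockMin_blockPartition (sum_range_weight_le hg), blockStart_eq_self hpos]

lemma toParking_ofParking (hg : IsParking g) : toParking (ofParking hg) = g :=
  funext fun i => ((mem_filter.1 (mem_labelBlock (ofParking hg) i)).2).symm

end ParkingBijection

end NoncrossingParking

/-- The number of type `A_{n-1}` noncrossing parking functions — pairs of a noncrossing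
partition `{B_1,…,B_r}` of `[n]` together with an assignment `B ↦ L_B` of pairwise
disjoint label sets covering `[n]` with `|L_B| = |B|` for every block `B` — is
`(n+1)^(n-1)`. -/
theorem card_typeA_noncrossingParkingFunctions (n : ℕ) :
    Nat.card {p : Σ π : Finpartition (Finset.univ : Finset (Fin n)),
        ({B // B ∈ π.parts} → Finset (Fin n)) //
      IsNoncrossing n p.1 ∧
      (∀ B, (p.2 B).card = B.1.card) ∧
      (∀ B B', B ≠ B' → Disjoint (p.2 B) (p.2 B')) ∧
      (∀ i : Fin n, ∃ B, i ∈ p.2 B)} = (n + 1) ^ (n - 1) := by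
  open NoncrossingParking in
  rw [← card_isParking]
  refine Nat.card_congr (Equiv.ofBijective (fun p => ⟨toParking p, isParking_toParking p⟩) ⟨?_, ?_⟩)
  · exact fun p q h => toParking_injective (congrArg Subtype.val h)
  · exact fun ⟨g, hg⟩ => ⟨ofParking hg, Subtype.ext (toParking_ofParking hg)⟩
end
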